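/- If g is a simple Lie algebra, then Der(g) is complete; in particular the derivation tower of g stabilizes after at most one step. -/

import Mathlib

/-- A Lie algebra is complete if its center is zero and every derivation is inner. -/
def IsCompleteLieAlgebra (K : Type*) (M : Type*) [Field K] [LieRing M] [LieAlgebra K M] : Prop :=
  LieAlgebra.center K M = ⊥ ∧
    ∀ D : LieDerivation K M M, ∃ m : M, D = LieDerivation.ad K M m

/-!
A derivation `Δ` of `Der(L)` preserves every perfect ideal, in particular the image of
`ad : L → Der(L)`, which is perfect because `L` is. Since `L` has trivial center, `ad` is
injective, so `Δ` restricted to `ad(L)` comes from a derivation `δ` of `L`. Then `Δ - ad δ`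
vanishes on `ad(L)`, and a derivation of `Der(L)` vanishing on `ad(L)` is zero, because
`⁅E, ad x⁆ = ad (E x)` and the centralizer of `ad(L)` in `Der(L)` is trivial.
-/

namespace LieDerivation

variable {R : Type*} [CommRing R]

lemma apply_mem_of_mem_lie_self {M : Type*} [LieRing M] [LieAlgebra R M]
    (Δ : LieDerivation R M M) {I : LieIdeal R M} {x : M} (hx : x ∈ ⁅I, I⁆) : Δ x ∈ I := by
  rw [← LieSubmodule.mem_toSubmodule, LieSubmodule.lieIdeal_oper_eq_linear_span'] at hx
  induction hx using Submodule.span_induction with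
  | mem _ h =>
    obtain ⟨a, ha, b, hb, rfl⟩ := h
    rw [apply_lie_eq_add]
    exact add_mem (lie_mem_left R M I a _ ha) (lie_mem_right R M I _ b hb)
  | zero => simp
  | add x y _ _ hx hy => simpa using add_mem hx hy
  | smul c x _ hx => simpa using I.smul_mem c hx

lemma exists_lift_of_injective {L M : Type*} [LieRing L] [LieAlgebra R L] [LieRing M]
    [LieAlgebra R M] {f : L →ₗ⁅R⁆ M} (hf : Function.Injective f) (Δ : LieDerivation R M M)
    (h : ∀ x, ∃ y, f y = Δ (f x)) : ∃ δ : LieDerivation R L L, ∀ x, f (δ x) = Δ (f x) := by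
  choose δ hδ using h
  refine ⟨⟨⟨⟨δ, fun x y ↦ hf ?_⟩, fun c x ↦ hf ?_⟩, fun a b ↦ hf ?_⟩, hδ⟩
  · simp only [map_add, hδ]
  · simp only [map_smul, hδ, RingHom.id_apply]
  · show f (δ ⁅a, b⁆) = f (⁅a, δ b⁆ - ⁅b, δ a⁆)
    rw [hδ, LieHom.map_lie, apply_lie_eq_sub, map_sub, LieHom.map_lie, LieHom.map_lie, hδ, hδ]

variable {L : Type*} [LieRing L] [LieAlgebra R L]

lemma center_eq_bot_of_center_eq_bot (h : LieAlgebra.center R L = ⊥) :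
    LieAlgebra.center R (LieDerivation R L L) = ⊥ := by
  refine (LieSubmodule.eq_bot_iff _).mpr fun D hD ↦ ?_
  have hD' : D ∈ LieModule.maxTrivSubmodule R L (LieDerivation R L L) := by
    rw [LieModule.mem_maxTrivSubmodule]
    exact fun x ↦ lie_ad x D ▸ hD _
  simpa [maxTrivSubmodule_eq_bot_of_center_eq_bot h] using hD'

lemma eq_zero_of_apply_ad_eq_zero (h : LieAlgebra.center R L = ⊥)
    (Δ : LieDerivation R (LieDerivation R L L) (LieDerivation R L L))
    (hΔ : ∀ x, Δ (ad R L x) = 0) : Δ = 0 := by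
  ext1 E
  have hE : Δ E ∈ LieModule.maxTrivSubmodule R L (LieDerivation R L L) := by
    rw [LieModule.mem_maxTrivSubmodule]
    intro x
    -- Leibniz on `⁅E, ad x⁆ = ad (E x)`: every term but `⁅ad x, Δ E⁆` is killed by `hΔ`.
    have hleib := apply_lie_eq_sub Δ E (ad R L x)
    rw [lie_der_ad_eq_ad_der, hΔ, hΔ, lie_zero, zero_sub, eq_comm, neg_eq_zero, lie_ad] at hleib
    exact hleib
  simpa [maxTrivSubmodule_eq_bot_of_center_eq_bot h] using hE

lemma exists_ad_eq_apply_ad (hL : ⁅(⊤ : LieIdeal R L), (⊤ : LieIdeal R L)⁆ = ⊤)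
    (Δ : LieDerivation R (LieDerivation R L L) (LieDerivation R L L)) (x : L) :
    ∃ y, ad R L y = Δ (ad R L x) := by
  have hx : ad R L x ∈ ⁅(ad R L).idealRange, (ad R L).idealRange⁆ := by
    rw [LieHom.idealRange_eq_map]
    exact LieIdeal.map_bracket_le _ (LieIdeal.mem_map (by rw [hL]; exact LieSubmodule.mem_top x))
  exact mem_ad_idealRange_iff.mp (apply_mem_of_mem_lie_self Δ hx)

end LieDerivation

lemma LieAlgebra.IsSimple.lie_top_top_eq_top (R L : Type*) [CommRing R] [LieRing L]
    [LieAlgebra R L] [LieAlgebra.IsSimple R L] : ⁅(⊤ : LieIdeal R L), (⊤ : LieIdeal R L)⁆ = ⊤ :=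
  lie_eq_self_of_isAtom_of_nonabelian ⊤ (LieAlgebra.IsSimple.isAtom_top R L)
    (IsSemisimple.non_abelian_of_isAtom ⊤ (LieAlgebra.IsSimple.isAtom_top R L))

/-- If `g` is a simple Lie algebra, then `Der(g)` is complete; in particular every
derivation of `Der(g)` is inner, so the derivation tower stabilizes after at most one
step. -/
theorem lieDerivation_of_simple_isComplete (K : Type*) (L : Type*) [Field K] [LieRing L]
    [LieAlgebra K L] [LieAlgebra.IsSimple K L] :
    IsCompleteLieAlgebra K (LieDerivation K L L) := by
  have hc : LieAlgebra.center K L = ⊥ := LieAlgebra.center_eq_bot K L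
  refine ⟨LieDerivation.center_eq_bot_of_center_eq_bot hc, fun Δ ↦ ?_⟩
  obtain ⟨δ, hδ⟩ := LieDerivation.exists_lift_of_injective
    (LieDerivation.injective_ad_of_center_eq_bot hc) Δ
    (LieDerivation.exists_ad_eq_apply_ad (LieAlgebra.IsSimple.lie_top_top_eq_top K L) Δ)
  refine ⟨δ, sub_eq_zero.mp (LieDerivation.eq_zero_of_apply_ad_eq_zero hc _ fun x ↦ ?_)⟩
  rw [LieDerivation.sub_apply, LieDerivation.ad_apply_apply, LieDerivation.lie_der_ad_eq_ad_der,
    hδ, sub_self]
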